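/- For ρ > 0, the equation 1/2 + ρ log β + ρ(1-β) = 0 has a unique solution β_m ∈ (0,1), given by β_m = -W(-e^{-(1+1/(2ρ))}), where W is the principal branch of the Lambert W function. -/

import Mathlib

open Set Real

/-! Writing `c = 1 + 1/(2ρ) > 1`, the equation is `log β - β = -c`, i.e. `β e^{-β} = e^{-c}`,
i.e. `(-β) e^{-β} = -e^{-c}`, so `-β` is a value of `W` at `-e^{-c} ∈ (-1/e, 0)`; the principal
branch there lies in `(-1, 0)`. Uniqueness in `(0, 1)` holds because `log x - x` is strictly
increasing on `(0, 1]`. -/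

lemma strictMonoOn_log_sub_self : StrictMonoOn (fun x : ℝ => log x - x) (Ioc 0 1) := by
  apply strictMonoOn_of_deriv_pos (convex_Ioc 0 1)
  · exact (continuousOn_log.mono fun x hx => hx.1.ne').sub continuousOn_id
  · intro x hx
    rw [interior_Ioc] at hx
    rw [deriv_fun_sub (differentiableAt_log hx.1.ne') differentiableAt_fun_id, deriv_log,
      deriv_id'', sub_pos]
    exact (one_lt_inv₀ hx.1).mpr hx.2

lemma log_sub_self_eq_iff {ρ β : ℝ} (hρ : ρ ≠ 0) :
    1/2 + ρ * log β + ρ * (1 - β) = 0 ↔ log β - β = -(1 + 1/(2*ρ)) := by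
  constructor <;> intro h
  · field_simp
    linear_combination 2 * h
  · field_simp at h
    linear_combination h / 2

lemma log_sub_self_eq_of_mul_exp_neg_eq {β c : ℝ} (hβ : 0 < β) (h : β * exp (-β) = exp (-c)) :
    log β - β = -c := by
  have := congrArg log h
  rwa [log_mul hβ.ne' (exp_ne_zero _), log_exp, log_exp, ← sub_eq_add_neg] at this

lemma neg_mem_Ioo_of_mul_exp_eq_neg_exp {w c : ℝ} (hc : 1 < c) (hw : w * exp w = -exp (-c))
    (hw1 : -1 ≤ w) : -w ∈ Ioo (0 : ℝ) 1 := by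
  have hneg : w < 0 := by
    by_contra! h
    have := mul_nonneg h (exp_pos w).le
    linarith [exp_pos (-c)]
  have hne : w ≠ -1 := by
    rintro rfl
    have : exp (-1) = exp (-c) := by linarith
    linarith [exp_injective this]
  constructor <;> linarith [lt_of_le_of_ne hw1 hne.symm]

/-- For ρ > 0, the equation 1/2 + ρ log β + ρ(1-β) = 0 has a unique solution
β_m in (0,1), given by β_m = -W(-e^{-(1+1/(2ρ))}) with W the principal Lambert
W branch (W(z)e^{W(z)} = z, W ≥ -1). -/
theorem beta_m_lambertW (ρ : ℝ) (hρ : 0 < ρ) (W : ℝ → ℝ)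
    (hW : ∀ z, -Real.exp (-1) ≤ z → W z * Real.exp (W z) = z ∧ -1 ≤ W z) :
    (∃! β : ℝ, β ∈ Set.Ioo (0:ℝ) 1 ∧ 1/2 + ρ * Real.log β + ρ * (1 - β) = 0) ∧
    (-W (-Real.exp (-(1 + 1/(2*ρ)))) ∈ Set.Ioo (0:ℝ) 1 ∧
      1/2 + ρ * Real.log (-W (-Real.exp (-(1 + 1/(2*ρ)))))
        + ρ * (1 - (-W (-Real.exp (-(1 + 1/(2*ρ)))))) = 0) := by
  simp only [log_sub_self_eq_iff hρ.ne']
  set c := 1 + 1/(2*ρ)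
  have hc : 1 < c := lt_add_of_pos_right 1 (by positivity)
  obtain ⟨hWeq, hW1⟩ := hW (-exp (-c)) (neg_le_neg (exp_le_exp.mpr (by linarith)))
  have hmem := neg_mem_Ioo_of_mul_exp_eq_neg_exp hc hWeq hW1
  have hsol : log (-W (-exp (-c))) - -W (-exp (-c)) = -c :=
    log_sub_self_eq_of_mul_exp_neg_eq hmem.1 (by rw [neg_neg, neg_mul, hWeq, neg_neg])
  refine ⟨⟨_, ⟨hmem, hsol⟩, fun β ⟨hβ, hβsol⟩ => ?_⟩, hmem, hsol⟩
  exact strictMonoOn_log_sub_self.injOn (Ioo_subset_Ioc_self hβ) (Ioo_subset_Ioc_self hmem)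
    (hβsol.trans hsol.symm)
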